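/- Let R be a commutative ring with elements w^s_{ij} (s ∈ {1,2,3}, 1 ≤ i < j ≤ 4) of which each squares to zero, satisfying w^s_{ip}w^s_{jp} = w^s_{ij}(w^s_{jp} − w^s_{ip}) for i < j < p and each s, with w^1_{12} = w^2_{12} = w^3_{12}. Then w^2_{13} w^1_{13} w^2_{14} w^1_{14} (w^2_{23} − w^1_{23}) w^3_{14} = w^2_{14} w^1_{14} w^3_{14} ( w^2_{12} w^2_{23} w^1_{13} − w^2_{12} w^2_{13} w^1_{13} − w^2_{13} w^1_{12} w^1_{23} + w^2_{13} w^1_{12} w^1_{13} ). -/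
import Mathlib


/-- The central algebraic manipulation in the proof of
`TC_{(2,3)}[p : F(ℝ³,4) → F(ℝ³,2)] ≥ 6`: from square-zero generators `w^s_{ij}`,
the Arnold relations and `w¹₁₂ = w²₁₂ = w³₁₂`, one gets
`w²₁₃ w¹₁₃ w²₁₄ w¹₁₄ (w²₂₃ − w¹₂₃) w³₁₄
  = w²₁₄ w¹₁₄ w³₁₄ (w²₁₂ w²₂₃ w¹₁₃ − w²₁₂ w²₁₃ w¹₁₃ − w²₁₃ w¹₁₂ w¹₂₃ + w²₁₃ w¹₁₂ w¹₁₃)`. -/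
theorem central_cup_product_identity {R : Type*} [CommRing R]
    (w : ℕ → ℕ → ℕ → R)  -- `w s i j` models `w^s_{ij}`
    (hsq : ∀ s i j, w s i j ^ 2 = 0)
    (harnold : ∀ s i j p, 1 ≤ i → i < j → j < p → p ≤ 4 →
      w s i p * w s j p = w s i j * (w s j p - w s i p))
    (h12 : w 1 1 2 = w 2 1 2 ∧ w 2 1 2 = w 3 1 2) :
    w 2 1 3 * w 1 1 3 * w 2 1 4 * w 1 1 4 * (w 2 2 3 - w 1 2 3) * w 3 1 4 =
      w 2 1 4 * w 1 1 4 * w 3 1 4 *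
        (w 2 1 2 * w 2 2 3 * w 1 1 3 - w 2 1 2 * w 2 1 3 * w 1 1 3 -
          w 2 1 3 * w 1 1 2 * w 1 2 3 + w 2 1 3 * w 1 1 2 * w 1 1 3) := by
  have h1 := harnold 2 1 2 3 (by norm_num) (by norm_num) (by norm_num) (by norm_num)
  have h2 := harnold 1 1 2 3 (by norm_num) (by norm_num) (by norm_num) (by norm_num)
  linear_combination (w 1 1 3 * w 2 1 4 * w 1 1 4 * w 3 1 4) * h1 -
    (w 2 1 3 * w 2 1 4 * w 1 1 4 * w 3 1 4) * h2
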